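/- Let α be a contact form defined on a neighbourhood of the θ-axis in ℝ³ (coordinates θ, x, y) whose coefficient functions are 2π-periodic in θ. Then there exist constants a, b ∈ ℝ such that, setting λ(θ,x,y) = 1 + ax + by, the contact form β = λα satisfies: along the θ-axis the 2-form dβ restricted to the pair of directions (∂θ, ·) does not vanish, i.e. i_{∂θ} dβ ≠ 0 at every point of the θ-axis; equivalently, the Reeb vector field of β is transverse to the θ-axis. -/

import Mathlib

open MeasureTheory


/-- The 1-form with coefficients `P, Q, R` (i.e. `α = P dθ + Q dx + R dy`). -/
def oneForm (P Q R : ℝ × ℝ × ℝ → ℝ) (p v : ℝ × ℝ × ℝ) : ℝ :=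
  P p * v.1 + Q p * v.2.1 + R p * v.2.2

/-- Exterior derivative of a 1-form on constant vector fields. -/
noncomputable def extDerivOneForm (α : ℝ × ℝ × ℝ → ℝ × ℝ × ℝ → ℝ)
    (p u v : ℝ × ℝ × ℝ) : ℝ :=
  fderiv ℝ (fun q => α q v) p u - fderiv ℝ (fun q => α q u) p v

/-- `(α ∧ dα)` evaluated on the standard basis at `p`. -/
noncomputable def contactVolume (α : ℝ × ℝ × ℝ → ℝ × ℝ × ℝ → ℝ) (p : ℝ × ℝ × ℝ) : ℝ :=
  α p (1,0,0) * extDerivOneForm α p (0,1,0) (0,0,1)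
    - α p (0,1,0) * extDerivOneForm α p (1,0,0) (0,0,1)
    + α p (0,0,1) * extDerivOneForm α p (1,0,0) (0,1,0)

/-- if `α` is a contact form near the θ-axis whose coefficients are
2π-periodic in θ, then there are `a, b ∈ ℝ` such that for `β = (1 + ax + by) α` the
interior product `i_{∂θ} dβ` is nonzero at every point of the θ-axis (equivalently the
Reeb field of `β` is transverse to the axis). -/
theorem stmt4 (P Q R : ℝ × ℝ × ℝ → ℝ)
    (hP : ContDiff ℝ (⊤ : ℕ∞) P) (hQ : ContDiff ℝ (⊤ : ℕ∞) Q) (hR : ContDiff ℝ (⊤ : ℕ∞) R)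
    (hperP : ∀ θ x y : ℝ, P (θ + 2 * Real.pi, x, y) = P (θ, x, y))
    (hperQ : ∀ θ x y : ℝ, Q (θ + 2 * Real.pi, x, y) = Q (θ, x, y))
    (hperR : ∀ θ x y : ℝ, R (θ + 2 * Real.pi, x, y) = R (θ, x, y))
    (hcontact : ∀ p : ℝ × ℝ × ℝ, contactVolume (oneForm P Q R) p ≠ 0) :
    ∃ a b : ℝ,
      ∀ θ : ℝ,
        (extDerivOneForm
            (fun p v => (1 + a * p.2.1 + b * p.2.2) * oneForm P Q R p v)
            (θ, 0, 0) (1, 0, 0) (0, 1, 0),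
         extDerivOneForm
            (fun p v => (1 + a * p.2.1 + b * p.2.2) * oneForm P Q R p v)
            (θ, 0, 0) (1, 0, 0) (0, 0, 1)) ≠ (0, 0) := by
  classical
  set α : ℝ × ℝ × ℝ → ℝ × ℝ × ℝ → ℝ := oneForm P Q R with hαdef
  -- smoothness of q ↦ α q v
  have hαv : ∀ v : ℝ × ℝ × ℝ, ContDiff ℝ (⊤ : ℕ∞) (fun q => α q v) := by
    intro v
    simpa [hαdef, oneForm] using
      ((hP.mul contDiff_const).add (hQ.mul contDiff_const)).add (hR.mul contDiff_const)
  -- the directional derivative functions are smooth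
  have hD : ∀ v u : ℝ × ℝ × ℝ, ContDiff ℝ (⊤ : ℕ∞) (fun x => fderiv ℝ (fun q => α q v) x u) :=
    fun v u => ((hαv v).fderiv_right (by simp)).clm_apply contDiff_const
  have hE : ∀ u v : ℝ × ℝ × ℝ, ContDiff ℝ (⊤ : ℕ∞) (fun x => extDerivOneForm α x u v) := by
    intro u v
    simpa [extDerivOneForm] using (hD v u).sub (hD u v)
  -- the inclusion of the axis
  have hj : ContDiff ℝ (⊤ : ℕ∞) (fun θ : ℝ => ((θ, 0, 0) : ℝ × ℝ × ℝ)) :=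
    contDiff_id.prodMk contDiff_const
  set pc : ℝ → ℝ := fun θ => P (θ, 0, 0) with hpcdef
  set fc : ℝ → ℝ := fun θ => extDerivOneForm α (θ, 0, 0) (1, 0, 0) (0, 1, 0) with hfcdef
  set gc : ℝ → ℝ := fun θ => extDerivOneForm α (θ, 0, 0) (1, 0, 0) (0, 0, 1) with hgcdef
  have hpc : Differentiable ℝ pc := ((hP.comp hj).differentiable (by simp))
  have hfc : Differentiable ℝ fc := (((hE (1,0,0) (0,1,0)).comp hj).differentiable (by simp))
  have hgc : Differentiable ℝ gc := (((hE (1,0,0) (0,0,1)).comp hj).differentiable (by simp))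
  set U : Set ℝ := {θ | pc θ ≠ 0} with hUdef
  set φ : ℝ → ℝ × ℝ := fun θ => (fc θ / pc θ, gc θ / pc θ) with hφdef
  have hφ : DifferentiableOn ℝ φ U :=
    (hfc.differentiableOn.div hpc.differentiableOn fun x hx => hx).prodMk
      (hgc.differentiableOn.div hpc.differentiableOn fun x hx => hx)
  -- the image of φ over U has measure zero
  set F : ℝ × ℝ → ℝ × ℝ := fun z => φ z.1 with hFdef
  set s : Set (ℝ × ℝ) := U ×ˢ ({0} : Set ℝ) with hsdef
  have hFs : DifferentiableOn ℝ F s := by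
    apply DifferentiableOn.comp hφ (differentiable_fst.differentiableOn)
    intro z hz
    exact hz.1
  have hs0 : volume s = 0 := by
    rw [hsdef, Measure.volume_eq_prod, Measure.prod_prod]; simp
  have himg : volume (F '' s) = 0 :=
    addHaar_image_eq_zero_of_differentiableOn_of_addHaar_eq_zero volume hFs hs0
  have himg2 : F '' s = φ '' U := by
    ext z
    constructor
    · rintro ⟨⟨u, t⟩, ⟨hu, _⟩, rfl⟩; exact ⟨u, hu, rfl⟩
    · rintro ⟨u, hu, rfl⟩; exact ⟨(u, 0), ⟨hu, rfl⟩, rfl⟩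
  have hex : ∃ ab : ℝ × ℝ, ab ∉ φ '' U := by
    by_contra h
    push_neg at h
    have hsub : (Set.univ : Set (ℝ × ℝ)) ⊆ φ '' U := fun z _ => h z
    have : volume (Set.univ : Set (ℝ × ℝ)) = 0 :=
      measure_mono_null hsub (himg2 ▸ himg)
    exact (isOpen_univ.measure_pos volume Set.univ_nonempty).ne' this
  obtain ⟨⟨a, b⟩, hab⟩ := hex
  refine ⟨a, b, fun θ => ?_⟩
  -- derivative of the factor λ
  set πx : ℝ × ℝ × ℝ →L[ℝ] ℝ :=
    (ContinuousLinearMap.fst ℝ ℝ ℝ).comp (ContinuousLinearMap.snd ℝ ℝ (ℝ × ℝ)) with hπx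
  set πy : ℝ × ℝ × ℝ →L[ℝ] ℝ :=
    (ContinuousLinearMap.snd ℝ ℝ ℝ).comp (ContinuousLinearMap.snd ℝ ℝ (ℝ × ℝ)) with hπy
  set ℓ : ℝ × ℝ × ℝ →L[ℝ] ℝ := a • πx + b • πy with hℓ
  have hL : ∀ x : ℝ × ℝ × ℝ,
      HasFDerivAt (fun q : ℝ × ℝ × ℝ => 1 + a * q.2.1 + b * q.2.2) ℓ x := by
    intro x
    have h1 : HasFDerivAt (fun q : ℝ × ℝ × ℝ => q.2.1) πx x := πx.hasFDerivAt
    have h2 : HasFDerivAt (fun q : ℝ × ℝ × ℝ => q.2.2) πy x := πy.hasFDerivAt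
    have := ((hasFDerivAt_const (1:ℝ) x).fun_add (h1.const_mul a)).fun_add (h2.const_mul b)
    simpa [hℓ, zero_add] using this
  -- key computation of fderiv of λ·α(·,v)
  have key : ∀ (v : ℝ × ℝ × ℝ) (x : ℝ × ℝ × ℝ),
      fderiv ℝ (fun q => (1 + a * q.2.1 + b * q.2.2) * α q v) x =
        (1 + a * x.2.1 + b * x.2.2) • fderiv ℝ (fun q => α q v) x + α x v • ℓ := by
    intro v x
    rw [fderiv_fun_mul (hL x).differentiableAt ((hαv v).differentiable (by simp) x),
      (hL x).fderiv]
  intro hzero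
  rw [Prod.mk.injEq] at hzero
  obtain ⟨h1, h2⟩ := hzero
  set x : ℝ × ℝ × ℝ := (θ, 0, 0) with hx
  -- compute the two components
  have hℓ100 : ℓ (1, 0, 0) = 0 := by simp [hℓ, hπx, hπy]
  have hℓ010 : ℓ (0, 1, 0) = a := by simp [hℓ, hπx, hπy]
  have hℓ001 : ℓ (0, 0, 1) = b := by simp [hℓ, hπx, hπy]
  have hα100 : α x (1, 0, 0) = pc θ := by simp [hαdef, oneForm, hx, hpcdef]
  have hcomp1 : extDerivOneForm
      (fun p v => (1 + a * p.2.1 + b * p.2.2) * α p v) x (1, 0, 0) (0, 1, 0)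
      = fc θ - a * pc θ := by
    rw [extDerivOneForm, key, key]
    simp only [ContinuousLinearMap.add_apply, ContinuousLinearMap.smul_apply,
      smul_eq_mul, hℓ100, hℓ010, hα100]
    have : (1 + a * x.2.1 + b * x.2.2 : ℝ) = 1 := by simp [hx]
    rw [this]
    simp [hfcdef, extDerivOneForm, hx]
    ring
  have hcomp2 : extDerivOneForm
      (fun p v => (1 + a * p.2.1 + b * p.2.2) * α p v) x (1, 0, 0) (0, 0, 1)
      = gc θ - b * pc θ := by
    rw [extDerivOneForm, key, key]
    simp only [ContinuousLinearMap.add_apply, ContinuousLinearMap.smul_apply,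
      smul_eq_mul, hℓ100, hℓ001, hα100]
    have : (1 + a * x.2.1 + b * x.2.2 : ℝ) = 1 := by simp [hx]
    rw [this]
    simp [hgcdef, extDerivOneForm, hx]
    ring
  rw [hcomp1] at h1
  rw [hcomp2] at h2
  have hf : fc θ = a * pc θ := by linarith
  have hg : gc θ = b * pc θ := by linarith
  by_cases hp : pc θ = 0
  · -- contact condition violated
    have hf0 : fc θ = 0 := by rw [hf, hp, mul_zero]
    have hg0 : gc θ = 0 := by rw [hg, hp, mul_zero]
    apply hcontact x
    have hα010 : α x (0, 1, 0) = Q x := by simp [hαdef, oneForm]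
    have hα001 : α x (0, 0, 1) = R x := by simp [hαdef, oneForm]
    have hP0 : α x (1, 0, 0) = 0 := by rw [hα100, hp]
    rw [contactVolume, hP0, hα010, hα001]
    have e1 : extDerivOneForm α x (1,0,0) (0,0,1) = gc θ := by simp [hgcdef, hx]
    have e2 : extDerivOneForm α x (1,0,0) (0,1,0) = fc θ := by simp [hfcdef, hx]
    rw [e1, e2, hf0, hg0]
    ring
  · -- (a,b) is in the image of φ, contradiction
    apply hab
    refine ⟨θ, hp, ?_⟩
    rw [hφdef]
    simp only
    rw [hf, hg]
    field_simp
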